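/- arXiv:1207.1698 — 2 statements merged into one kernel-verified Lean document; each statement's English description precedes it below -/
import Mathlib

section
/- Let I ⊂ ℝ be an open interval, a, b ∈ I with a < b, f : I → ℝ a twice differentiable mapping such that f'' is integrable on [a,b], and suppose |f''| belongs to the Godunova-Levin class Q(I). If 0 ≤ λ ≤ 1/2, then |(λ − 1)·f((a+b)/2) − λ·(f(a)+f(b))/2 + (1/(b−a))·∫ₐᵇ f(x) dx| ≤ ((b−a)²/2) · [(1−λ)·ln(2(1−λ)²) + (16λ − 4)/8] · (|f''(a)| + |f''(b)|). -/
/-! Integrating by parts twice against the kernel `(x - a) (x - a - λ (b - a)) / 2` on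
`[a, (a + b) / 2]`, and against its mirror image on `[(a + b) / 2, b]`, turns the left-hand side
into `1 / (b - a)` times `∫ K f''`. Writing `x = t a + (1 - t) b`, the Godunova–Levin inequality
gives `|f'' x| ≤ (b - a) / (b - x) |f'' a| + (b - a) / (x - a) |f'' b|`: the factor `x - a` of
the kernel cancels the second singularity, while integrating the first one produces the
logarithm. The reflection `x ↦ a + b - x` reduces the right half to the left one. -/

open MeasureTheory Set Real

/-- A nonnegative function `g` belongs to the Godunova–Levin class `Q(I)` if for all
`x, y ∈ I` and `l ∈ (0,1)` one has `g (l*x + (1-l)*y) ≤ g x / l + g y / (1-l)`. -/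
def GodunovaLevin (I : Set ℝ) (g : ℝ → ℝ) : Prop :=
  (∀ x ∈ I, 0 ≤ g x) ∧
    ∀ x ∈ I, ∀ y ∈ I, ∀ l : ℝ, 0 < l → l < 1 →
      g (l * x + (1 - l) * y) ≤ g x / l + g y / (1 - l)

theorem GodunovaLevin.le_of_mem_Ioo {I : Set ℝ} {g : ℝ → ℝ} (hg : GodunovaLevin I g)
    {a b x : ℝ} (ha : a ∈ I) (hb : b ∈ I) (hx : x ∈ Ioo a b) :
    g x ≤ (b - a) / (b - x) * g a + (b - a) / (x - a) * g b := by
  obtain ⟨hax, hxb⟩ := hx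
  have hab : 0 < b - a := by linarith
  have h := hg.2 a ha b hb ((b - x) / (b - a)) (div_pos (by linarith) hab)
    ((div_lt_one hab).2 (by linarith))
  rw [show (b - x) / (b - a) * a + (1 - (b - x) / (b - a)) * b = x by field_simp; ring,
    show 1 - (b - x) / (b - a) = (x - a) / (b - a) by field_simp; ring,
    div_div_eq_mul_div, div_div_eq_mul_div] at h
  exact h.trans_eq (by ring)

namespace intervalIntegral

theorem integral_mul_deriv_deriv_eq {a b : ℝ} {u u' u'' f f' f'' : ℝ → ℝ}
    (hu : ∀ x ∈ uIcc a b, HasDerivAt u (u' x) x)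
    (hu' : ∀ x ∈ uIcc a b, HasDerivAt u' (u'' x) x)
    (hf : ∀ x ∈ uIcc a b, HasDerivAt f (f' x) x)
    (hf' : ∀ x ∈ uIcc a b, HasDerivAt f' (f'' x) x)
    (hu'' : IntervalIntegrable u'' volume a b) (hf'' : IntervalIntegrable f'' volume a b) :
    ∫ x in a..b, u x * f'' x
      = u b * f' b - u a * f' a - (u' b * f b - u' a * f a) + ∫ x in a..b, u'' x * f x := by
  have hu'_int : IntervalIntegrable u' volume a b :=
    ContinuousOn.intervalIntegrable fun x hx ↦ (hu' x hx).continuousAt.continuousWithinAt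
  have hf'_int : IntervalIntegrable f' volume a b :=
    ContinuousOn.intervalIntegrable fun x hx ↦ (hf' x hx).continuousAt.continuousWithinAt
  rw [integral_mul_deriv_eq_deriv_mul hu hf' hu'_int hf'',
    integral_mul_deriv_eq_deriv_mul hu' hf hu'' hf'_int]
  ring

theorem integral_abs_deriv_eq_of_nonpos_of_nonneg {φ φ' : ℝ → ℝ} {a c m : ℝ}
    (hac : a ≤ c) (hcm : c ≤ m) (hφ : ∀ x ∈ Icc a m, HasDerivAt φ (φ' x) x)
    (hφ' : IntervalIntegrable φ' volume a m) (hneg : ∀ x ∈ Icc a c, φ' x ≤ 0)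
    (hpos : ∀ x ∈ Icc c m, 0 ≤ φ' x) :
    ∫ x in a..m, |φ' x| = φ a + φ m - 2 * φ c := by
  have hac' : IntervalIntegrable φ' volume a c :=
    hφ'.mono_set <| by
      rw [uIcc_of_le hac, uIcc_of_le (hac.trans hcm)]; exact Icc_subset_Icc_right hcm
  have hcm' : IntervalIntegrable φ' volume c m :=
    hφ'.mono_set <| by
      rw [uIcc_of_le hcm, uIcc_of_le (hac.trans hcm)]; exact Icc_subset_Icc_left hac
  have hleft : ∫ x in a..c, |φ' x| = φ a - φ c := by
    rw [integral_congr (g := fun x ↦ -φ' x)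
        fun x hx ↦ abs_of_nonpos (hneg x (by rwa [uIcc_of_le hac] at hx)), integral_neg,
      integral_eq_sub_of_hasDerivAt _ hac', neg_sub]
    intro x hx
    rw [uIcc_of_le hac] at hx
    exact hφ x ⟨hx.1, hx.2.trans hcm⟩
  have hright : ∫ x in c..m, |φ' x| = φ m - φ c := by
    rw [integral_congr (g := φ')
        fun x hx ↦ abs_of_nonneg (hpos x (by rwa [uIcc_of_le hcm] at hx)),
      integral_eq_sub_of_hasDerivAt _ hcm']
    intro x hx
    rw [uIcc_of_le hcm] at hx
    exact hφ x ⟨hac.trans hx.1, hx.2⟩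
  rw [← integral_add_adjacent_intervals hac'.abs hcm'.abs, hleft, hright]
  ring

end intervalIntegral

open intervalIntegral

section MidpointKernel

variable {a b lam : ℝ}

theorem integral_abs_sub_div_two (hab : a < b) (hlam0 : 0 ≤ lam) (hlam1 : lam ≤ 1 / 2) :
    ∫ x in a..(a + b) / 2, |x - a - lam * (b - a)| / 2
      = (b - a) ^ 2 * (lam ^ 2 / 2 - lam / 4 + 1 / 16) := by
  have h := integral_abs_deriv_eq_of_nonpos_of_nonneg (a := a) (c := a + lam * (b - a))
    (m := (a + b) / 2) (φ := fun x ↦ (x - a - lam * (b - a)) ^ 2 / 4)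
    (φ' := fun x ↦ (x - a - lam * (b - a)) / 2) (by nlinarith) (by nlinarith)
    (fun x _ ↦ ((((hasDerivAt_id' x).sub_const a).sub_const _).pow 2).div_const 4
      |>.congr_deriv (by ring))
    ((by fun_prop : Continuous fun x ↦ (x - a - lam * (b - a)) / 2).intervalIntegrable _ _)
    (fun x hx ↦ by linarith [hx.2]) (fun x hx ↦ by linarith [hx.1])
  simp only [abs_div, abs_two] at h
  rw [h]
  ring

theorem integral_mul_abs_sub_div (hab : a < b) (hlam0 : 0 ≤ lam) (hlam1 : lam ≤ 1 / 2) :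
    ∫ x in a..(a + b) / 2, (x - a) * |x - a - lam * (b - a)| / (2 * (b - x))
      = (b - a) ^ 2 *
        (5 * lam / 4 - lam ^ 2 / 2 - 5 / 16 + (1 - lam) / 2 * log (2 * (1 - lam) ^ 2)) := by
  have hac : a ≤ a + lam * (b - a) := by nlinarith
  have hcm : a + lam * (b - a) ≤ (a + b) / 2 := by nlinarith
  have hb_sub : ∀ x ∈ Icc a ((a + b) / 2), b - x ≠ 0 := fun x hx ↦ by linarith [hx.2]
  -- long division: the integrand (without the absolute value) is
  -- `-(x - a) / 2 - (1 - λ) (b - a) / 2 + (1 - λ) (b - a) ^ 2 / (2 (b - x))`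
  have hψ : ∀ x ∈ Icc a ((a + b) / 2), HasDerivAt
      (fun x ↦ -(x - a) ^ 2 / 4 - (1 - lam) * (b - a) * (x - a) / 2
        - (b - a) ^ 2 * (1 - lam) / 2 * log (b - x))
      ((x - a) * (x - a - lam * (b - a)) / (2 * (b - x))) x := by
    intro x hx
    have hlog := ((hasDerivAt_id' x).const_sub b).log (hb_sub x hx)
    refine (((((hasDerivAt_id' x).sub_const a).pow 2).neg.div_const 4).sub
      ((((hasDerivAt_id' x).sub_const a).const_mul ((1 - lam) * (b - a))).div_const 2)).sub
      (hlog.const_mul _) |>.congr_deriv ?_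
    have := hb_sub x hx
    field_simp
    ring
  have hcont : ContinuousOn (fun x ↦ (x - a) * (x - a - lam * (b - a)) / (2 * (b - x)))
      (uIcc a ((a + b) / 2)) := by
    rw [uIcc_of_le (by linarith)]
    exact ContinuousOn.div (by fun_prop) (by fun_prop)
      fun x hx ↦ mul_ne_zero two_ne_zero (hb_sub x hx)
  have h := integral_abs_deriv_eq_of_nonpos_of_nonneg hac hcm hψ hcont.intervalIntegrable
    (fun x hx ↦ div_nonpos_of_nonpos_of_nonneg
      (mul_nonpos_of_nonneg_of_nonpos (by linarith [hx.1]) (by linarith [hx.2]))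
      (by linarith [hx.2]))
    (fun x hx ↦ div_nonneg (mul_nonneg (by linarith [hx.1]) (by linarith [hx.1]))
      (by linarith [hx.2]))
  have habs : EqOn (fun x ↦ (x - a) * |x - a - lam * (b - a)| / (2 * (b - x)))
      (fun x ↦ |(x - a) * (x - a - lam * (b - a)) / (2 * (b - x))|) (uIcc a ((a + b) / 2)) := by
    intro x hx
    rw [uIcc_of_le (by linarith)] at hx
    dsimp only
    rw [abs_div, abs_mul, abs_of_nonneg (by linarith [hx.1] : 0 ≤ x - a),
      abs_of_pos (by linarith [hx.2] : 0 < 2 * (b - x))]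
  rw [integral_congr habs, h]
  have hlog : log (2 * (1 - lam) ^ 2)
      = 2 * log ((1 - lam) * (b - a)) - log (b - a) - log ((b - a) / 2) := by
    have h1 : 1 - lam ≠ 0 := by linarith
    have h2 : b - a ≠ 0 := by linarith
    rw [log_mul two_ne_zero (pow_ne_zero 2 h1), log_pow, log_mul h1 h2, log_div h2 two_ne_zero]
    push_cast
    ring
  rw [hlog, show b - (a + b) / 2 = (b - a) / 2 by ring,
    show b - (a + lam * (b - a)) = (1 - lam) * (b - a) by ring]
  ring

theorem abs_integral_left_kernel_mul_le {g : ℝ → ℝ} {A B : ℝ} (hab : a < b)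
    (hlam0 : 0 ≤ lam) (hlam1 : lam ≤ 1 / 2) (hg : IntervalIntegrable g volume a ((a + b) / 2))
    (hbound : ∀ x ∈ Ioo a ((a + b) / 2),
      |g x| ≤ (b - a) / (b - x) * A + (b - a) / (x - a) * B) :
    |∫ x in a..(a + b) / 2, (x - a) * (x - a - lam * (b - a)) / 2 * g x|
      ≤ (b - a) ^ 3 * (A * (5 * lam / 4 - lam ^ 2 / 2 - 5 / 16
          + (1 - lam) / 2 * log (2 * (1 - lam) ^ 2)) + B * (lam ^ 2 / 2 - lam / 4 + 1 / 16)) := by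
  have ham : a ≤ (a + b) / 2 := by linarith
  have hF₁ : IntervalIntegrable (fun x ↦ (x - a) * |x - a - lam * (b - a)| / (2 * (b - x)))
      volume a ((a + b) / 2) := by
    refine ContinuousOn.intervalIntegrable (ContinuousOn.div (by fun_prop) (by fun_prop) ?_)
    intro x hx
    rw [uIcc_of_le ham] at hx
    linarith [hx.2]
  have hF₂ : IntervalIntegrable (fun x ↦ |x - a - lam * (b - a)| / 2) volume a ((a + b) / 2) :=
    (by fun_prop : Continuous fun x ↦ |x - a - lam * (b - a)| / 2).intervalIntegrable _ _
  have hKg : IntervalIntegrable (fun x ↦ (x - a) * (x - a - lam * (b - a)) / 2 * g x)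
      volume a ((a + b) / 2) :=
    hg.continuousOn_mul (by fun_prop)
  calc |∫ x in a..(a + b) / 2, (x - a) * (x - a - lam * (b - a)) / 2 * g x|
      ≤ ∫ x in a..(a + b) / 2, |(x - a) * (x - a - lam * (b - a)) / 2 * g x| :=
        abs_integral_le_integral_abs ham
    _ ≤ ∫ x in a..(a + b) / 2, (b - a) *
          (A * ((x - a) * |x - a - lam * (b - a)| / (2 * (b - x)))
            + B * (|x - a - lam * (b - a)| / 2)) := by
        refine integral_mono_on_of_le_Ioo ham hKg.abs
          (((hF₁.const_mul A).add (hF₂.const_mul B)).const_mul _) fun x hx ↦ ?_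
        have hxa : 0 < x - a := by linarith [hx.1]
        have hbx : 0 < b - x := by linarith [hx.2]
        calc |(x - a) * (x - a - lam * (b - a)) / 2 * g x|
            = (x - a) * |x - a - lam * (b - a)| / 2 * |g x| := by
              rw [abs_mul, abs_div, abs_mul, abs_of_pos hxa, abs_two]
          _ ≤ (x - a) * |x - a - lam * (b - a)| / 2
                * ((b - a) / (b - x) * A + (b - a) / (x - a) * B) :=
              mul_le_mul_of_nonneg_left (hbound x hx) (by positivity)
          _ = _ := by field_simp
    _ = (b - a) * (A * ∫ x in a..(a + b) / 2, (x - a) * |x - a - lam * (b - a)| / (2 * (b - x)))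
          + (b - a) * (B * ∫ x in a..(a + b) / 2, |x - a - lam * (b - a)| / 2) := by
        rw [intervalIntegral.integral_const_mul,
          integral_add (hF₁.const_mul A) (hF₂.const_mul B), intervalIntegral.integral_const_mul,
          intervalIntegral.integral_const_mul, mul_add]
    _ = _ := by
        rw [integral_mul_abs_sub_div hab hlam0 hlam1, integral_abs_sub_div_two hab hlam0 hlam1]
        ring

theorem abs_integral_right_kernel_mul_le {g : ℝ → ℝ} {A B : ℝ} (hab : a < b)
    (hlam0 : 0 ≤ lam) (hlam1 : lam ≤ 1 / 2) (hg : IntervalIntegrable g volume ((a + b) / 2) b)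
    (hbound : ∀ x ∈ Ioo ((a + b) / 2) b,
      |g x| ≤ (b - a) / (b - x) * A + (b - a) / (x - a) * B) :
    |∫ x in (a + b) / 2..b, (b - x) * (b - x - lam * (b - a)) / 2 * g x|
      ≤ (b - a) ^ 3 * (B * (5 * lam / 4 - lam ^ 2 / 2 - 5 / 16
          + (1 - lam) / 2 * log (2 * (1 - lam) ^ 2)) + A * (lam ^ 2 / 2 - lam / 4 + 1 / 16)) := by
  have hreflect : ∫ x in (a + b) / 2..b, (b - x) * (b - x - lam * (b - a)) / 2 * g x
      = ∫ y in a..(a + b) / 2, (y - a) * (y - a - lam * (b - a)) / 2 * g (a + b - y) := by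
    have h := integral_comp_sub_left (a := a) (b := (a + b) / 2)
      (fun x ↦ (b - x) * (b - x - lam * (b - a)) / 2 * g x) (a + b)
    rw [show a + b - (a + b) / 2 = (a + b) / 2 by ring, add_sub_cancel_left] at h
    rw [← h]
    exact integral_congr fun y _ ↦ by ring_nf
  rw [hreflect]
  refine abs_integral_left_kernel_mul_le hab hlam0 hlam1 ?_ fun y hy ↦ ?_
  · have h := (hg.comp_sub_left (a + b)).symm
    rwa [show a + b - (a + b) / 2 = (a + b) / 2 by ring, add_sub_cancel_right] at h
  · have h := hbound (a + b - y) ⟨by linarith [hy.2], by linarith [hy.1]⟩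
    rw [show b - (a + b - y) = y - a by ring, show a + b - y - a = b - y by ring] at h
    linarith

end MidpointKernel

theorem midpoint_trapezoid_combination_eq_integral_kernel {a b lam : ℝ} {f f' f'' : ℝ → ℝ}
    (hab : a < b) (hf : ∀ x ∈ Icc a b, HasDerivAt f (f' x) x)
    (hf' : ∀ x ∈ Icc a b, HasDerivAt f' (f'' x) x) (hf'' : IntervalIntegrable f'' volume a b) :
    (lam - 1) * f ((a + b) / 2) - lam * (f a + f b) / 2 + (1 / (b - a)) * ∫ x in a..b, f x
      = (1 / (b - a)) * ((∫ x in a..(a + b) / 2, (x - a) * (x - a - lam * (b - a)) / 2 * f'' x)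
        + ∫ x in (a + b) / 2..b, (b - x) * (b - x - lam * (b - a)) / 2 * f'' x) := by
  have ham : a ≤ (a + b) / 2 := by linarith
  have hmb : (a + b) / 2 ≤ b := by linarith
  have hleft : uIcc a ((a + b) / 2) ⊆ Icc a b := by
    rw [uIcc_of_le ham]; exact Icc_subset_Icc_right hmb
  have hright : uIcc ((a + b) / 2) b ⊆ Icc a b := by
    rw [uIcc_of_le hmb]; exact Icc_subset_Icc_left ham
  have hf_cont : ContinuousOn f (Icc a b) := fun x hx ↦ (hf x hx).continuousAt.continuousWithinAt
  have hL := integral_mul_deriv_deriv_eq (u := fun x ↦ (x - a) * (x - a - lam * (b - a)) / 2)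
    (u' := fun x ↦ x - a - lam * (b - a) / 2) (u'' := fun _ ↦ 1)
    (fun x _ ↦ (((hasDerivAt_id' x).sub_const a).mul
      (((hasDerivAt_id' x).sub_const a).sub_const _)).div_const 2 |>.congr_deriv (by ring))
    (fun x _ ↦ ((hasDerivAt_id' x).sub_const a).sub_const _)
    (fun x hx ↦ hf x (hleft hx)) (fun x hx ↦ hf' x (hleft hx)) intervalIntegrable_const
    (hf''.mono_set (by rwa [uIcc_of_le hab.le]))
  have hR := integral_mul_deriv_deriv_eq (u := fun x ↦ (b - x) * (b - x - lam * (b - a)) / 2)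
    (u' := fun x ↦ x - b + lam * (b - a) / 2) (u'' := fun _ ↦ 1)
    (fun x _ ↦ (((hasDerivAt_id' x).const_sub b).mul
      (((hasDerivAt_id' x).const_sub b).sub_const _)).div_const 2 |>.congr_deriv (by ring))
    (fun x _ ↦ ((hasDerivAt_id' x).sub_const b).add_const _)
    (fun x hx ↦ hf x (hright hx)) (fun x hx ↦ hf' x (hright hx)) intervalIntegrable_const
    (hf''.mono_set (by rwa [uIcc_of_le hab.le]))
  rw [hL, hR, ← integral_add_adjacent_intervals ((hf_cont.mono hleft).intervalIntegrable)
    ((hf_cont.mono hright).intervalIntegrable)]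
  simp only [one_mul]
  have hba : b - a ≠ 0 := by linarith
  field_simp
  ring

theorem godunova_levin_corollary_first_case_general
    (I : Set ℝ) (hI' : I.OrdConnected)
    (a b : ℝ) (ha : a ∈ I) (hb : b ∈ I) (hab : a < b)
    (f f' f'' : ℝ → ℝ)
    (hf' : ∀ x ∈ I, HasDerivAt f (f' x) x)
    (hf'' : ∀ x ∈ I, HasDerivAt f' (f'' x) x)
    (hint : IntervalIntegrable f'' volume a b)
    (hQ : GodunovaLevin I (fun x => |f'' x|))
    (lam : ℝ) (hlam0 : 0 ≤ lam) (hlam1 : lam ≤ 1 / 2) :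
    |(lam - 1) * f ((a + b) / 2) - lam * (f a + f b) / 2
        + (1 / (b - a)) * ∫ x in a..b, f x|
      ≤ ((b - a) ^ 2 / 2) *
          ((1 - lam) * Real.log (2 * (1 - lam) ^ 2) + (16 * lam - 4) / 8) *
          (|f'' a| + |f'' b|) := by
  have hIcc : Icc a b ⊆ I := hI'.out ha hb
  have hbound : ∀ x ∈ Ioo a b,
      |f'' x| ≤ (b - a) / (b - x) * |f'' a| + (b - a) / (x - a) * |f'' b| :=
    fun x hx ↦ hQ.le_of_mem_Ioo ha hb hx
  have hL := abs_integral_left_kernel_mul_le hab hlam0 hlam1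
    (hint.mono_set (uIcc_subset_uIcc_left (by rw [uIcc_of_le hab.le]; constructor <;> linarith)))
    fun x hx ↦ hbound x ⟨hx.1, by linarith [hx.2]⟩
  have hR := abs_integral_right_kernel_mul_le hab hlam0 hlam1
    (hint.mono_set (uIcc_subset_uIcc_right (by rw [uIcc_of_le hab.le]; constructor <;> linarith)))
    fun x hx ↦ hbound x ⟨by linarith [hx.1], hx.2⟩
  rw [midpoint_trapezoid_combination_eq_integral_kernel hab (fun x hx ↦ hf' x (hIcc hx))
    (fun x hx ↦ hf'' x (hIcc hx)) hint, abs_mul, abs_of_pos (one_div_pos.2 (sub_pos.2 hab))]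
  have hba : b - a ≠ 0 := by linarith
  calc _ ≤ 1 / (b - a) * (_ + _) := by gcongr; exact (abs_add_le _ _).trans (add_le_add hL hR)
    _ = _ := by field_simp; ring

theorem godunova_levin_corollary_first_case
    (I : Set ℝ) (hI : IsOpen I) (hI' : I.OrdConnected)
    (a b : ℝ) (ha : a ∈ I) (hb : b ∈ I) (hab : a < b)
    (f f' f'' : ℝ → ℝ)
    (hf' : ∀ x ∈ I, HasDerivAt f (f' x) x)
    (hf'' : ∀ x ∈ I, HasDerivAt f' (f'' x) x)
    (hint : IntervalIntegrable f'' volume a b)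
    (hQ : GodunovaLevin I (fun x => |f'' x|))
    (lam : ℝ) (hlam0 : 0 ≤ lam) (hlam1 : lam ≤ 1 / 2) :
    |(lam - 1) * f ((a + b) / 2) - lam * (f a + f b) / 2
        + (1 / (b - a)) * ∫ x in a..b, f x|
      ≤ ((b - a) ^ 2 / 2) *
          ((1 - lam) * Real.log (2 * (1 - lam) ^ 2) + (16 * lam - 4) / 8) *
          (|f'' a| + |f'' b|) :=
  godunova_levin_corollary_first_case_general I hI' a b ha hb hab f f' f'' hf' hf'' hint hQ lam
    hlam0 hlam1
end

section
/- Let I ⊂ ℝ be an open interval, a, b ∈ I with a < b, f : I → ℝ a twice differentiable mapping such that f'' is integrable on [a,b], let q ≥ 1, and suppose |f''|^q belongs to the Godunova-Levin class Q(I). Then |(1/(b−a))·∫ₐᵇ f(x) dx − f((a+b)/2)| ≤ ((b−a)²/2) · (1/24)^(1 − 1/q) · { ( (1/8)·|f''(a)|^q + (ln 2 − 5/8)·|f''(b)|^q )^(1/q) + ( (ln 2 − 5/8)·|f''(a)|^q + (1/8)·|f''(b)|^q )^(1/q) }. -/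
/-!
Two integrations by parts on each half of `[a, b]` write `∫ₐᵇ f - (b - a) f(m)`, `m = (a + b) / 2`,
as `∫ₐᵐ (x - a)²/2 f'' + ∫ₘᵇ (x - b)²/2 f''`. On the left half, Hölder's inequality for the
weight `(x - a)²/2` bounds the first integral by `(∫ w)^(1 - 1/q) (∫ w |f''|^q)^(1/q)`, and the
Godunova–Levin inequality at `λ = (b - x)/(b - a)` gives
`|f'' x|^q ≤ (b - a)/(b - x) |f'' a|^q + (b - a)/(x - a) |f'' b|^q`, whose weighted integral is
elementary; `log 2` enters through `∫ₐᵐ (x - a)²/(b - x)`. The reflection `x ↦ -x` preserves the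
Godunova–Levin class and turns the right half into a left half.
-/

open MeasureTheory Set Real

namespace GodunovaLevin

variable {I : Set ℝ} {g : ℝ → ℝ}

theorem le_of_mem_Ioo_s9 (hg : GodunovaLevin I g) {a b x : ℝ} (ha : a ∈ I) (hb : b ∈ I)
    (hx : x ∈ Ioo a b) : g x ≤ (b - a) / (b - x) * g a + (b - a) / (x - a) * g b := by
  obtain ⟨hax, hxb⟩ := hx
  have hba : 0 < b - a := by linarith
  have key := hg.2 a ha b hb ((b - x) / (b - a)) (div_pos (by linarith) hba)
    ((div_lt_one hba).2 (by linarith))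
  have hl : 1 - (b - x) / (b - a) = (x - a) / (b - a) := by field_simp; ring
  have hconv : (b - x) / (b - a) * a + (x - a) / (b - a) * b = x := by field_simp; ring
  rw [hl, hconv, div_div_eq_mul_div, div_div_eq_mul_div] at key
  exact key.trans_eq (by ring)

theorem sub_sq_div_two_mul_le (hg : GodunovaLevin I g) {a b x : ℝ} (ha : a ∈ I) (hb : b ∈ I)
    (hx : x ∈ Ioo a b) :
    (x - a) ^ 2 / 2 * g x ≤ (b - a) / 2 * (g a * ((x - a) ^ 2 / (b - x)) + g b * (x - a)) := by
  have hax : x - a ≠ 0 := (sub_pos.2 hx.1).ne'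
  have hbx : b - x ≠ 0 := (sub_pos.2 hx.2).ne'
  calc (x - a) ^ 2 / 2 * g x
      ≤ (x - a) ^ 2 / 2 * ((b - a) / (b - x) * g a + (b - a) / (x - a) * g b) :=
        mul_le_mul_of_nonneg_left (hg.le_of_mem_Ioo_s9 ha hb hx) (by positivity)
    _ = _ := by field_simp

theorem comp_neg (hg : GodunovaLevin I g) : GodunovaLevin (-I) (fun x => g (-x)) :=
  ⟨fun x hx => hg.1 (-x) hx, fun x hx y hy l hl₀ hl₁ => by
    simpa only [neg_add, mul_neg] using hg.2 (-x) hx (-y) hy l hl₀ hl₁⟩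

end GodunovaLevin

section MidpointIdentity

variable {f f' f'' : ℝ → ℝ}

theorem integral_sub_sq_div_two_mul_eq {c d : ℝ}
    (hf : ∀ x ∈ uIcc c d, HasDerivAt f (f' x) x) (hf' : ∀ x ∈ uIcc c d, HasDerivAt f' (f'' x) x)
    (hint : IntervalIntegrable f'' volume c d) :
    ∫ x in c..d, (x - c) ^ 2 / 2 * f'' x =
      (d - c) ^ 2 / 2 * f' d - (d - c) * f d + ∫ x in c..d, f x := by
  have hsq : ∀ x ∈ uIcc c d, HasDerivAt (fun x => (x - c) ^ 2 / 2) (x - c) x := fun x _ => by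
    simpa using (((hasDerivAt_id x).sub_const c).pow 2).div_const 2
  rw [intervalIntegral.integral_mul_deriv_eq_deriv_mul hsq hf'
      ((continuous_sub_right c).intervalIntegrable c d) hint,
    intervalIntegral.integral_mul_deriv_eq_deriv_mul (fun x _ => (hasDerivAt_id' x).sub_const c)
      hf intervalIntegrable_const (HasDerivAt.continuousOn hf').intervalIntegrable]
  simp only [sub_self, one_mul, zero_mul]
  ring

theorem integral_sub_mul_midpoint_eq {a b : ℝ}
    (hf : ∀ x ∈ uIcc a b, HasDerivAt f (f' x) x) (hf' : ∀ x ∈ uIcc a b, HasDerivAt f' (f'' x) x)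
    (hint : IntervalIntegrable f'' volume a b) :
    (∫ x in a..b, f x) - (b - a) * f ((a + b) / 2) =
      (∫ x in a..(a + b) / 2, (x - a) ^ 2 / 2 * f'' x) +
        ∫ x in (a + b) / 2..b, (x - b) ^ 2 / 2 * f'' x := by
  have hm : (a + b) / 2 ∈ uIcc a b := by
    rcases le_total a b with h | h
    · exact mem_uIcc_of_le (by linarith) (by linarith)
    · exact mem_uIcc_of_ge (by linarith) (by linarith)
  have hleft := uIcc_subset_uIcc_left hm
  have hright := uIcc_subset_uIcc_right hm
  have hf_int : IntervalIntegrable f volume a b := (HasDerivAt.continuousOn hf).intervalIntegrable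
  rw [intervalIntegral.integral_symm (f := fun x => (x - b) ^ 2 / 2 * f'' x) b,
    integral_sub_sq_div_two_mul_eq (fun x hx => hf x (hleft hx)) (fun x hx => hf' x (hleft hx))
      (hint.mono_set hleft),
    integral_sub_sq_div_two_mul_eq (fun x hx => hf x (hright (uIcc_comm b _ ▸ hx)))
      (fun x hx => hf' x (hright (uIcc_comm b _ ▸ hx))) (hint.mono_set hright).symm,
    intervalIntegral.integral_symm (f := f) ((a + b) / 2) b,
    ← intervalIntegral.integral_add_adjacent_intervals (hf_int.mono_set hleft)
      (hf_int.mono_set hright)]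
  ring

end MidpointIdentity

theorem integral_mul_le_weight_mul_Lp_of_nonneg {α : Type*} [MeasurableSpace α] {μ : Measure α}
    {w φ : α → ℝ} {p : ℝ} (hp : 1 ≤ p) (hw : ∀ x, 0 ≤ w x) (hφ : ∀ x, 0 ≤ φ x)
    (hw_int : Integrable w μ) (hφ_meas : AEStronglyMeasurable φ μ)
    (hwφ_int : Integrable (fun x => w x * φ x ^ p) μ) :
    ∫ x, w x * φ x ∂μ ≤ (∫ x, w x ∂μ) ^ (1 - 1 / p) * (∫ x, w x * φ x ^ p ∂μ) ^ (1 / p) := by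
  rcases hp.eq_or_lt with rfl | hp
  · simp
  have hp₀ : 0 < p := by linarith
  have hpq : (1 - 1 / p)⁻¹.HolderConjugate p := by
    simpa [one_div] using Real.HolderConjugate.one_sub_inv_inv (a := p⁻¹) (by positivity)
      (inv_lt_one_of_one_lt₀ hp)
  have hr₀ : 1 - 1 / p ≠ 0 := (inv_pos.mp hpq.pos).ne'
  have hF_nonneg : ∀ x, 0 ≤ w x ^ (1 - 1 / p) := fun x => rpow_nonneg (hw x) _
  have hG_nonneg : ∀ x, 0 ≤ w x ^ (1 / p) * φ x := fun x => by positivity [hw x, hφ x]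
  have hF_pow : ∀ x, (w x ^ (1 - 1 / p)) ^ (1 - 1 / p)⁻¹ = w x := fun x => by
    rw [← rpow_mul (hw x), mul_inv_cancel₀ hr₀, rpow_one]
  have hG_pow : ∀ x, (w x ^ (1 / p) * φ x) ^ p = w x * φ x ^ p := fun x => by
    rw [mul_rpow (rpow_nonneg (hw x) _) (hφ x), ← rpow_mul (hw x), one_div_mul_cancel hp₀.ne',
      rpow_one]
  have hFG : ∀ x, w x ^ (1 - 1 / p) * (w x ^ (1 / p) * φ x) = w x * φ x := fun x => by
    rw [← mul_assoc, ← rpow_add' (hw x) (by simp), sub_add_cancel, rpow_one]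
  have hw_meas := hw_int.aestronglyMeasurable.aemeasurable
  have hF : MemLp (fun x => w x ^ (1 - 1 / p)) (ENNReal.ofReal (1 - 1 / p)⁻¹) μ := by
    rw [← integrable_norm_rpow_iff (hw_meas.pow_const _).aestronglyMeasurable
      (by simpa using hpq.pos) (by simp), ENNReal.toReal_ofReal hpq.nonneg]
    exact hw_int.congr (ae_of_all _ fun x => by simp only [norm_of_nonneg (hF_nonneg x), hF_pow])
  have hG : MemLp (fun x => w x ^ (1 / p) * φ x) (ENNReal.ofReal p) μ := by
    have hG_meas : AEStronglyMeasurable (fun x => w x ^ (1 / p) * φ x) μ :=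
      (hw_meas.pow_const _).aestronglyMeasurable.mul hφ_meas
    rw [← integrable_norm_rpow_iff hG_meas (by simpa using hp₀) (by simp),
      ENNReal.toReal_ofReal hp₀.le]
    exact hwφ_int.congr (ae_of_all _ fun x => by simp only [norm_of_nonneg (hG_nonneg x), hG_pow])
  have := integral_mul_le_Lp_mul_Lq_of_nonneg hpq (ae_of_all _ hF_nonneg)
    (ae_of_all _ hG_nonneg) hF hG
  simpa only [hFG, hF_pow, hG_pow, one_div (1 - 1 / p)⁻¹, inv_inv] using this

theorem mul_rpow_one_sub_mul_mul_rpow {c s t p : ℝ} (hc : 0 ≤ c) (hs : 0 ≤ s) (ht : 0 ≤ t) :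
    (c * s) ^ (1 - p) * (c * t) ^ p = c * (s ^ (1 - p) * t ^ p) := by
  rw [mul_rpow hc hs, mul_rpow hc ht, mul_mul_mul_comm, ← rpow_add' hc (by simp), sub_add_cancel,
    rpow_one]

section LeftHalf

variable {a b : ℝ}

theorem integral_sub_sq_left_half :
    ∫ x in a..(a + b) / 2, (x - a) ^ 2 = (b - a) ^ 3 / 24 := by
  simp only [intervalIntegral.integral_comp_sub_right fun x => x ^ 2, integral_pow]
  ring

theorem integral_sub_left_half :
    ∫ x in a..(a + b) / 2, (x - a) = (b - a) ^ 2 / 8 := by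
  simp only [intervalIntegral.integral_comp_sub_right fun x => x, integral_id]
  ring

theorem intervalIntegrable_sub_sq_div_sub_left_half (hab : a < b) :
    IntervalIntegrable (fun x => (x - a) ^ 2 / (b - x)) volume a ((a + b) / 2) :=
  ContinuousOn.intervalIntegrable_of_Icc (by linarith) <|
    ContinuousOn.div (by fun_prop) (by fun_prop) fun x hx => by linarith [hx.2]

theorem integral_sub_sq_div_sub_left_half (hab : a < b) :
    ∫ x in a..(a + b) / 2, (x - a) ^ 2 / (b - x) = (b - a) ^ 2 * (log 2 - 5 / 8) := by
  have hderiv : ∀ x ∈ uIcc a ((a + b) / 2), HasDerivAt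
      (fun x => -(b - a) ^ 2 * log (b - x) - 2 * (b - a) * x - (b - x) ^ 2 / 2)
      ((x - a) ^ 2 / (b - x)) x := by
    intro x hx
    rw [uIcc_of_le (by linarith)] at hx
    have hbx : b - x ≠ 0 := by linarith [hx.2]
    have h := ((((hasDerivAt_id x).const_sub b).log hbx).const_mul (-(b - a) ^ 2)).sub
      ((hasDerivAt_id x).const_mul (2 * (b - a))) |>.sub
      ((((hasDerivAt_id x).const_sub b).pow 2).div_const 2)
    refine h.congr_deriv ?_
    simp only [id]
    field_simp
    ring
  rw [intervalIntegral.integral_eq_sub_of_hasDerivAt hderiv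
    (intervalIntegrable_sub_sq_div_sub_left_half hab),
    show b - (a + b) / 2 = (b - a) / 2 by ring, log_div (by linarith) two_ne_zero]
  ring

theorem intervalIntegrable_godunovaLevin_majorant_left_half (hab : a < b) (A B : ℝ) :
    IntervalIntegrable (fun x => (b - a) / 2 * (A * ((x - a) ^ 2 / (b - x)) + B * (x - a)))
      volume a ((a + b) / 2) :=
  (((intervalIntegrable_sub_sq_div_sub_left_half hab).const_mul A).add
    (((continuous_sub_right a).intervalIntegrable _ _).const_mul B)).const_mul _

theorem integral_godunovaLevin_majorant_left_half (hab : a < b) (A B : ℝ) :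
    ∫ x in a..(a + b) / 2, (b - a) / 2 * (A * ((x - a) ^ 2 / (b - x)) + B * (x - a)) =
      (b - a) ^ 3 / 2 * ((log 2 - 5 / 8) * A + 1 / 8 * B) := by
  rw [intervalIntegral.integral_const_mul, intervalIntegral.integral_add
      ((intervalIntegrable_sub_sq_div_sub_left_half hab).const_mul A)
      (((continuous_sub_right a).intervalIntegrable _ _).const_mul B),
    intervalIntegral.integral_const_mul, intervalIntegral.integral_const_mul,
    integral_sub_sq_div_sub_left_half hab, integral_sub_left_half]
  ring

theorem integrableOn_sub_sq_div_two_mul_abs_rpow_of_godunovaLevin {I : Set ℝ} {g : ℝ → ℝ}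
    {q : ℝ} (ha : a ∈ I) (hb : b ∈ I) (hab : a < b) (hg : IntervalIntegrable g volume a b)
    (hQ : GodunovaLevin I (fun x => |g x| ^ q)) :
    IntegrableOn (fun x => (x - a) ^ 2 / 2 * |g x| ^ q) (Ioc a ((a + b) / 2)) := by
  have hg_int : IntegrableOn g (Ioc a ((a + b) / 2)) :=
    hg.1.mono_set (Ioc_subset_Ioc_right (by linarith))
  refine (intervalIntegrable_godunovaLevin_majorant_left_half hab (|g a| ^ q) (|g b| ^ q)).1.mono'
    ((by fun_prop : Continuous fun x : ℝ => (x - a) ^ 2 / 2).aestronglyMeasurable.mul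
      (hg_int.abs.1.aemeasurable.pow_const q).aestronglyMeasurable)
    ((ae_restrict_iff' measurableSet_Ioc).2 (ae_of_all _ fun x hx => ?_))
  rw [norm_of_nonneg (by positivity)]
  exact hQ.sub_sq_div_two_mul_le ha hb ⟨hx.1, by linarith [hx.2]⟩

theorem setIntegral_sub_sq_div_two_mul_abs_rpow_le_of_godunovaLevin {I : Set ℝ} {g : ℝ → ℝ}
    {q : ℝ} (ha : a ∈ I) (hb : b ∈ I) (hab : a < b) (hg : IntervalIntegrable g volume a b)
    (hQ : GodunovaLevin I (fun x => |g x| ^ q)) :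
    ∫ x in Ioc a ((a + b) / 2), (x - a) ^ 2 / 2 * |g x| ^ q ≤
      (b - a) ^ 3 / 2 * ((log 2 - 5 / 8) * |g a| ^ q + 1 / 8 * |g b| ^ q) := by
  rw [← integral_godunovaLevin_majorant_left_half hab,
    intervalIntegral.integral_of_le (by linarith)]
  exact setIntegral_mono_on
    (integrableOn_sub_sq_div_two_mul_abs_rpow_of_godunovaLevin ha hb hab hg hQ)
    (intervalIntegrable_godunovaLevin_majorant_left_half hab _ _).1 measurableSet_Ioc
    fun x hx => hQ.sub_sq_div_two_mul_le ha hb ⟨hx.1, by linarith [hx.2]⟩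

theorem abs_integral_left_half_le_of_godunovaLevin {I : Set ℝ} {g : ℝ → ℝ} {q : ℝ}
    (ha : a ∈ I) (hb : b ∈ I) (hab : a < b) (hg : IntervalIntegrable g volume a b) (hq : 1 ≤ q)
    (hQ : GodunovaLevin I (fun x => |g x| ^ q)) :
    |∫ x in a..(a + b) / 2, (x - a) ^ 2 / 2 * g x| ≤
      (b - a) ^ 3 / 2 * (1 / 24 : ℝ) ^ (1 - 1 / q) *
        ((log 2 - 5 / 8) * |g a| ^ q + 1 / 8 * |g b| ^ q) ^ (1 / q) := by
  have ham : a ≤ (a + b) / 2 := by linarith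
  have hw : ∫ x in Ioc a ((a + b) / 2), (x - a) ^ 2 / 2 = (b - a) ^ 3 / 2 * (1 / 24) := by
    rw [← intervalIntegral.integral_of_le ham, intervalIntegral.integral_div,
      integral_sub_sq_left_half]
    ring
  have hlog : 0 < log 2 - 5 / 8 := by linarith [log_two_gt_d9]
  calc |∫ x in a..(a + b) / 2, (x - a) ^ 2 / 2 * g x|
      ≤ ∫ x in Ioc a ((a + b) / 2), (x - a) ^ 2 / 2 * |g x| := by
        rw [intervalIntegral.integral_of_le ham]
        refine abs_integral_le_integral_abs.trans_eq (integral_congr_ae (ae_of_all _ fun x => ?_))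
        simp only [abs_mul, abs_of_nonneg (by positivity : 0 ≤ (x - a) ^ 2 / 2)]
    _ ≤ (∫ x in Ioc a ((a + b) / 2), (x - a) ^ 2 / 2) ^ (1 - 1 / q) *
          (∫ x in Ioc a ((a + b) / 2), (x - a) ^ 2 / 2 * |g x| ^ q) ^ (1 / q) :=
        integral_mul_le_weight_mul_Lp_of_nonneg hq (fun x => by positivity)
          (fun x => abs_nonneg _)
          (by fun_prop : Continuous fun x : ℝ => (x - a) ^ 2 / 2).integrableOn_Ioc
          (hg.1.mono_set (Ioc_subset_Ioc_right (by linarith))).abs.1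
          (integrableOn_sub_sq_div_two_mul_abs_rpow_of_godunovaLevin ha hb hab hg hQ)
    _ ≤ ((b - a) ^ 3 / 2 * (1 / 24)) ^ (1 - 1 / q) *
          ((b - a) ^ 3 / 2 * ((log 2 - 5 / 8) * |g a| ^ q + 1 / 8 * |g b| ^ q)) ^ (1 / q) := by
        rw [hw]
        gcongr
        exact setIntegral_sub_sq_div_two_mul_abs_rpow_le_of_godunovaLevin ha hb hab hg hQ
    _ = _ := by
        rw [mul_rpow_one_sub_mul_mul_rpow (by positivity) (by norm_num) (by positivity), mul_assoc]

end LeftHalf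

theorem abs_integral_right_half_le_of_godunovaLevin {I : Set ℝ} {g : ℝ → ℝ} {a b q : ℝ}
    (ha : a ∈ I) (hb : b ∈ I) (hab : a < b) (hg : IntervalIntegrable g volume a b) (hq : 1 ≤ q)
    (hQ : GodunovaLevin I (fun x => |g x| ^ q)) :
    |∫ x in (a + b) / 2..b, (x - b) ^ 2 / 2 * g x| ≤
      (b - a) ^ 3 / 2 * (1 / 24 : ℝ) ^ (1 - 1 / q) *
        (1 / 8 * |g a| ^ q + (log 2 - 5 / 8) * |g b| ^ q) ^ (1 / q) := by
  have h := abs_integral_left_half_le_of_godunovaLevin (neg_mem_neg.2 hb) (neg_mem_neg.2 ha)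
    (neg_lt_neg hab) ((IntervalIntegrable.iff_comp_neg (by simp)).1 hg.symm) hq hQ.comp_neg
  have hreflect : ∫ x in -b..(-b + -a) / 2, (x - -b) ^ 2 / 2 * g (-x) =
      ∫ x in (a + b) / 2..b, (x - b) ^ 2 / 2 * g x := by
    have := intervalIntegral.integral_comp_neg (a := -b) (b := -((a + b) / 2))
      fun y => (y - b) ^ 2 / 2 * g y
    rw [neg_neg, neg_neg] at this
    rw [show (-b + -a) / 2 = -((a + b) / 2) by ring, ← this]
    exact intervalIntegral.integral_congr fun x _ => by ring
  rw [hreflect, neg_neg, neg_neg, show -a - -b = b - a by ring] at h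
  rwa [add_comm (1 / 8 * _)]

theorem godunova_levin_midpoint_power_ineq_general
    (I : Set ℝ) (hI' : I.OrdConnected)
    (a b : ℝ) (ha : a ∈ I) (hb : b ∈ I) (hab : a < b)
    (f f' f'' : ℝ → ℝ)
    (hf' : ∀ x ∈ I, HasDerivAt f (f' x) x)
    (hf'' : ∀ x ∈ I, HasDerivAt f' (f'' x) x)
    (hint : IntervalIntegrable f'' volume a b)
    (q : ℝ) (hq : 1 ≤ q)
    (hQ : GodunovaLevin I (fun x => |f'' x| ^ q)) :
    |(1 / (b - a)) * (∫ x in a..b, f x) - f ((a + b) / 2)|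
      ≤ ((b - a) ^ 2 / 2) * ((1 / 24 : ℝ)) ^ (1 - 1 / q) *
        (((1 / 8) * |f'' a| ^ q + (Real.log 2 - 5 / 8) * |f'' b| ^ q) ^ (1 / q)
          + ((Real.log 2 - 5 / 8) * |f'' a| ^ q + (1 / 8) * |f'' b| ^ q) ^ (1 / q)) := by
  have hsub := hI'.uIcc_subset ha hb
  have hba : 0 < b - a := sub_pos.2 hab
  have hmean : (1 / (b - a)) * (∫ x in a..b, f x) - f ((a + b) / 2) =
      ((∫ x in a..b, f x) - (b - a) * f ((a + b) / 2)) / (b - a) := by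
    field_simp
  rw [hmean, integral_sub_mul_midpoint_eq (fun x hx => hf' x (hsub hx))
      (fun x hx => hf'' x (hsub hx)) hint, abs_div, abs_of_pos hba, div_le_iff₀ hba]
  calc _ ≤ _ := abs_add_le _ _
    _ ≤ _ := add_le_add (abs_integral_left_half_le_of_godunovaLevin ha hb hab hint hq hQ)
        (abs_integral_right_half_le_of_godunovaLevin ha hb hab hint hq hQ)
    _ = _ := by ring

theorem godunova_levin_midpoint_power_ineq
    (I : Set ℝ) (hI : IsOpen I) (hI' : I.OrdConnected)
    (a b : ℝ) (ha : a ∈ I) (hb : b ∈ I) (hab : a < b)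
    (f f' f'' : ℝ → ℝ)
    (hf' : ∀ x ∈ I, HasDerivAt f (f' x) x)
    (hf'' : ∀ x ∈ I, HasDerivAt f' (f'' x) x)
    (hint : IntervalIntegrable f'' volume a b)
    (q : ℝ) (hq : 1 ≤ q)
    (hQ : GodunovaLevin I (fun x => |f'' x| ^ q)) :
    |(1 / (b - a)) * (∫ x in a..b, f x) - f ((a + b) / 2)|
      ≤ ((b - a) ^ 2 / 2) * ((1 / 24 : ℝ)) ^ (1 - 1 / q) *
        (((1 / 8) * |f'' a| ^ q + (Real.log 2 - 5 / 8) * |f'' b| ^ q) ^ (1 / q)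
          + ((Real.log 2 - 5 / 8) * |f'' a| ^ q + (1 / 8) * |f'' b| ^ q) ^ (1 / q)) :=
  godunova_levin_midpoint_power_ineq_general I hI' a b ha hb hab f f' f'' hf' hf'' hint q hq hQ
end
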